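/- arXiv:2504.04778 — 6 statements merged into one kernel-verified Lean document; each statement's English description precedes it below -/
import Mathlib

section
/- Let m ≥ 1, let P : ℝ² → Fin m and A : Fin m → (ℝ² →ₗ[ℝ] ℝ²) define the piecewise linear homogeneous map T(z) = A(P(z))(z). Let v ∈ ℝ², v ≠ 0, let s, s′, t > 0 and k ≥ 1, and suppose T^k(s • v) = s′ • v. If t • v has the same itinerary as s • v up to time k (i.e. P(T^i(t • v)) = P(T^i(s • v)) for all 0 ≤ i < k), then T^k(t • v) = ((s′/s) · t) • v. In particular, on the set of points of the half-line {t • v : t > 0} sharing this itinerary, the k-step return map is the linear homogeneous 1D map t ↦ λ t with λ = s′/s. -/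
theorem stmt6 {m : ℕ} (hm : 1 ≤ m)
    (P : (Fin 2 → ℝ) → Fin m)
    (A : Fin m → ((Fin 2 → ℝ) →ₗ[ℝ] (Fin 2 → ℝ)))
    (T : (Fin 2 → ℝ) → (Fin 2 → ℝ))
    (hT : ∀ z, T z = A (P z) z)
    (v : Fin 2 → ℝ) (hv : v ≠ 0)
    (s s' t : ℝ) (hs : 0 < s) (hs' : 0 < s') (ht : 0 < t)
    (k : ℕ) (hk : 1 ≤ k)
    (hret : T^[k] (s • v) = s' • v)
    (hitin : ∀ i, i < k → P (T^[i] (t • v)) = P (T^[i] (s • v))) :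
    T^[k] (t • v) = ((s' / s) * t) • v := by
  have key : ∀ i, i ≤ k → T^[i] (t • v) = (t / s) • T^[i] (s • v) := by
    intro i hi
    induction i with
    | zero =>
      simp [smul_smul, div_mul_cancel₀ _ hs.ne']
    | succ n ih =>
      have hn : n ≤ k := Nat.le_of_succ_le hi
      have hnk : n < k := hi
      rw [Function.iterate_succ_apply', Function.iterate_succ_apply',
        hT, hT, hitin n hnk, ih hn, map_smul]
  rw [key k le_rfl, hret, smul_smul]
  ring_nf
end

section
/- Let h > 0 and s_L > 1 > s_R > 0, and define F : ℝ → ℝ by F(x) = s_L·x if x < h and F(x) = s_R·x if x ≥ h. Then F restricted to the half-open interval I = [s_R·h, s_L·h) is a bijection of I onto itself. -/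
/-! On `[s_R h, h)` the map is multiplication by `s_L`, with image `[s_L s_R h, s_L h)`; on
`[h, s_L h)` it is multiplication by `s_R`, with image `[s_R h, s_R s_L h)`. Since
`s_L s_R h = s_R s_L h`, the two images are the two pieces of `I` in swapped order, so `F` is a
two-interval exchange of `I`. -/

open Set

theorem Set.BijOn.union_of_disjoint {α β : Type*} {f : α → β} {s₁ s₂ : Set α} {t₁ t₂ : Set β}
    (h₁ : BijOn f s₁ t₁) (h₂ : BijOn f s₂ t₂) (hs : Disjoint s₁ s₂) (ht : Disjoint t₁ t₂) :
    BijOn f (s₁ ∪ s₂) (t₁ ∪ t₂) := by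
  refine h₁.union h₂ ((injOn_union hs).2 ⟨h₁.injOn, h₂.injOn, ?_⟩)
  intro x hx y hy hxy
  exact ht.ne_of_mem (h₁.mapsTo hx) (h₂.mapsTo hy) hxy

theorem Set.BijOn.Ico_exchange {α : Type*} [LinearOrder α] {f : α → α} {a b c d : α}
    (h₁ : BijOn f (Ico a b) (Ico d c)) (h₂ : BijOn f (Ico b c) (Ico a d))
    (hab : a ≤ b) (hbc : b ≤ c) (had : a ≤ d) (hdc : d ≤ c) :
    BijOn f (Ico a c) (Ico a c) := by
  have h := h₁.union_of_disjoint h₂ Ico_disjoint_Ico_same Ico_disjoint_Ico_same.symm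
  rwa [Ico_union_Ico_eq_Ico hab hbc, union_comm, Ico_union_Ico_eq_Ico had hdc] at h

theorem Set.bijOn_mul_left_Ico {K : Type*} [Field K] [LinearOrder K] [IsStrictOrderedRing K]
    {c : K} (hc : 0 < c) (a b : K) :
    BijOn (c * ·) (Ico a b) (Ico (c * a) (c * b)) :=
  image_mul_left_Ico hc a b ▸ (mul_right_injective₀ hc.ne').injOn.bijOn_image

theorem stmt7 (h sL sR : ℝ) (hh : 0 < h) (hL : 1 < sL) (hR0 : 0 < sR) (hR1 : sR < 1)
    (F : ℝ → ℝ) (hF : ∀ x, F x = if x < h then sL * x else sR * x) :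
    Set.BijOn F (Set.Ico (sR * h) (sL * h)) (Set.Ico (sR * h) (sL * h)) := by
  have hL0 : 0 < sL := one_pos.trans hL
  have hleft : EqOn (sL * ·) F (Ico (sR * h) h) := fun x hx => by simp [hF, hx.2]
  have hright : EqOn (sR * ·) F (Ico h (sL * h)) := fun x hx => by simp [hF, hx.1]
  have h₁ := (bijOn_mul_left_Ico hL0 (sR * h) h).congr hleft
  rw [mul_left_comm] at h₁
  refine h₁.Ico_exchange ((bijOn_mul_left_Ico hR0 h (sL * h)).congr hright) ?_ ?_ ?_ ?_
  · exact mul_le_of_le_one_left hh.le hR1.le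
  · exact le_mul_of_one_le_left hh.le hL.le
  · exact mul_le_mul_of_nonneg_left (le_mul_of_one_le_left hh.le hL.le) hR0.le
  · exact mul_le_of_le_one_left (mul_pos hL0 hh).le hR1.le
end

section
/- Let h > 0 and s_L, s_R > 0, and define F : ℝ → ℝ by F(x) = s_L·x if x < h and F(x) = s_R·x if x ≥ h. If x ≠ 0 and F^n(x) = x for some n ≥ 1, then there exist natural numbers p, q with p + q = n such that s_L^p · s_R^q = 1 (namely p is the number of indices 0 ≤ i < n with F^i(x) < h and q the number with F^i(x) ≥ h). -/
theorem stmt8 (h sL sR : ℝ) (hh : 0 < h) (hL : 0 < sL) (hR : 0 < sR)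
    (F : ℝ → ℝ) (hF : ∀ x, F x = if x < h then sL * x else sR * x)
    (x : ℝ) (hx : x ≠ 0) (n : ℕ) (hn : 1 ≤ n) (hper : F^[n] x = x) :
    ∃ p q : ℕ,
      p = ((Finset.range n).filter (fun i => F^[i] x < h)).card ∧
      q = ((Finset.range n).filter (fun i => ¬ F^[i] x < h)).card ∧
      p + q = n ∧ sL ^ p * sR ^ q = 1 := by
  have key : ∀ m : ℕ, F^[m] x =
      (∏ i ∈ Finset.range m, if F^[i] x < h then sL else sR) * x := by
    intro m
    induction m with
    | zero => simp
    | succ m ih =>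
      rw [Function.iterate_succ_apply', hF, ih, Finset.prod_range_succ, ih]
      by_cases hc : (∏ i ∈ Finset.range m, if F^[i] x < h then sL else sR) * x < h <;>
        simp [hc] <;> ring
  refine ⟨_, _, rfl, rfl, ?_, ?_⟩
  · exact Finset.card_filter_add_card_filter_not (p := fun i => F^[i] x < h) |>.trans (Finset.card_range n)
  · have := key n
    rw [hper] at this
    have hprod : (∏ i ∈ Finset.range n, if F^[i] x < h then sL else sR) = 1 := by
      exact mul_right_cancel₀ hx (by linarith)
    rw [← hprod, Finset.prod_ite, Finset.prod_const, Finset.prod_const]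
end

section
/- Let h > 0 and s_L, s_R > 0, and define F : ℝ → ℝ by F(x) = s_L·x if x < h and F(x) = s_R·x if x ≥ h. If s_L^p · s_R^q ≠ 1 for all natural numbers p, q with p + q ≥ 1, then F has no periodic point other than the fixed point 0: F^n(x) = x with n ≥ 1 implies x = 0. -/
theorem stmt9 (h sL sR : ℝ) (hh : 0 < h) (hL : 0 < sL) (hR : 0 < sR)
    (F : ℝ → ℝ) (hF : ∀ x, F x = if x < h then sL * x else sR * x)
    (hirr : ∀ p q : ℕ, 1 ≤ p + q → sL ^ p * sR ^ q ≠ 1)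
    (x : ℝ) (n : ℕ) (hn : 1 ≤ n) (hper : F^[n] x = x) :
    x = 0 := by
  have key : ∀ (n : ℕ) (y : ℝ), ∃ p q : ℕ, p + q = n ∧ F^[n] y = sL ^ p * sR ^ q * y := by
    intro n
    induction n with
    | zero => intro y; exact ⟨0, 0, rfl, by simp⟩
    | succ m ih =>
      intro y
      obtain ⟨p, q, hpq, hval⟩ := ih (F y)
      rw [hF y] at hval
      by_cases hy : y < h
      · exact ⟨p + 1, q, by omega, by
          rw [Function.iterate_succ_apply, hF y, hval, if_pos hy]; ring⟩
      · exact ⟨p, q + 1, by omega, by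
          rw [Function.iterate_succ_apply, hF y, hval, if_neg hy]; ring⟩
  obtain ⟨p, q, hpq, hval⟩ := key n x
  by_contra hx
  rw [hper] at hval
  have : sL ^ p * sR ^ q = 1 :=
    mul_right_cancel₀ hx (by rw [← hval]; ring)
  exact hirr p q (by omega) this
end

section
/- Let h > 0 and s_L > 1 > s_R > 0, and define F : ℝ → ℝ by F(x) = s_L·x if x < h and F(x) = s_R·x if x ≥ h. Let p, q be positive coprime integers with s_L^p · s_R^q = 1. Then every period of a nonzero periodic point is a multiple of p + q: if x ≠ 0 and F^n(x) = x with n ≥ 1, then (p + q) divides n. -/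
theorem stmt10 (h sL sR : ℝ) (hh : 0 < h) (hL : 1 < sL) (hR0 : 0 < sR) (hR1 : sR < 1)
    (F : ℝ → ℝ) (hF : ∀ x, F x = if x < h then sL * x else sR * x)
    (p q : ℕ) (hp : 0 < p) (hq : 0 < q) (hcop : Nat.Coprime p q)
    (hpq : sL ^ p * sR ^ q = 1)
    (x : ℝ) (hx : x ≠ 0) (n : ℕ) (hn : 1 ≤ n) (hper : F^[n] x = x) :
    (p + q) ∣ n := by
  have horb : ∀ m y, ∃ a b : ℕ, a + b = m ∧ F^[m] y = sL ^ a * sR ^ b * y := by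
    intro m
    induction m with
    | zero => intro y; exact ⟨0, 0, rfl, by simp⟩
    | succ m ih =>
      intro y
      obtain ⟨a, b, hab, hy⟩ := ih y
      rw [Function.iterate_succ_apply', hy, hF]
      by_cases hc : sL ^ a * sR ^ b * y < h
      · exact ⟨a + 1, b, by omega, by rw [if_pos hc]; ring⟩
      · exact ⟨a, b + 1, by omega, by rw [if_neg hc]; ring⟩
  obtain ⟨a, b, hab, hy⟩ := horb n x
  rw [hper] at hy
  have hprod : sL ^ a * sR ^ b = 1 := by
    have h1 : sL ^ a * sR ^ b * x = 1 * x := by rw [one_mul]; exact hy.symm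
    exact mul_right_cancel₀ hx h1
  have hL0 : (0:ℝ) < sL := lt_trans one_pos hL
  have hLpos : 0 < Real.log sL := Real.log_pos hL
  have e1 : (a : ℝ) * Real.log sL + (b : ℝ) * Real.log sR = 0 := by
    have := congrArg Real.log hprod
    rw [Real.log_mul (pow_ne_zero _ (ne_of_gt hL0)) (pow_ne_zero _ (ne_of_gt hR0)),
      Real.log_pow, Real.log_pow, Real.log_one] at this
    push_cast
    linarith [this]
  have e2 : (p : ℝ) * Real.log sL + (q : ℝ) * Real.log sR = 0 := by
    have := congrArg Real.log hpq
    rw [Real.log_mul (pow_ne_zero _ (ne_of_gt hL0)) (pow_ne_zero _ (ne_of_gt hR0)),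
      Real.log_pow, Real.log_pow, Real.log_one] at this
    push_cast
    linarith [this]
  have hz : ((a : ℝ) * q - (b : ℝ) * p) * Real.log sL = 0 := by
    linear_combination (q : ℝ) * e1 - (b : ℝ) * e2
  have haqR : (a : ℝ) * q = (b : ℝ) * p := by
    rcases mul_eq_zero.mp hz with h0 | h0
    · linarith [sub_eq_zero.mp h0]
    · exact absurd h0 (ne_of_gt hLpos)
  have haq : a * q = b * p := by exact_mod_cast haqR
  have hdvd : p ∣ a := by
    refine Nat.Coprime.dvd_of_dvd_mul_right hcop ⟨b, ?_⟩
    rw [haq, mul_comm]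
  obtain ⟨k, hk⟩ := hdvd
  have hb : b = k * q := by
    have h1 : p * (k * q) = p * b := by
      rw [hk] at haq; rw [mul_comm b p] at haq; rw [← haq]; ring
    have := Nat.eq_of_mul_eq_mul_left hp h1
    omega
  exact ⟨k, by rw [← hab, hk, hb]; ring⟩
end

section
/- Let h > 0 and s_L, s_R > 0, and define F : ℝ → ℝ by F(x) = s_L·x if x < h and F(x) = s_R·x if x ≥ h; let D : ℝ → ℝ be the slope function D(x) = s_L if x < h and D(x) = s_R if x ≥ h. Let x ∈ ℝ and suppose there exist 0 < a ≤ b such that F^i(x) ∈ [a, b] for all i ≥ 0. Then the Lyapunov exponent of the orbit is zero: (1/n)·Σ_{i=0}^{n-1} log D(F^i(x)) tends to 0 as n → ∞. -/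
open Filter

theorem stmt11 (h sL sR : ℝ) (hh : 0 < h) (hL : 0 < sL) (hR : 0 < sR)
    (F : ℝ → ℝ) (hF : ∀ x, F x = if x < h then sL * x else sR * x)
    (D : ℝ → ℝ) (hD : ∀ x, D x = if x < h then sL else sR)
    (x : ℝ) (a b : ℝ) (ha : 0 < a) (hab : a ≤ b)
    (hbdd : ∀ i : ℕ, F^[i] x ∈ Set.Icc a b) :
    Tendsto (fun n : ℕ => (n : ℝ)⁻¹ * ∑ i ∈ Finset.range n, Real.log (D (F^[i] x)))
      atTop (nhds 0) := by
  set g : ℕ → ℝ := fun i => Real.log (F^[i] x) with hg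
  have hpos : ∀ i, 0 < F^[i] x := fun i => lt_of_lt_of_le ha (hbdd i).1
  have hterm : ∀ i, Real.log (D (F^[i] x)) = g (i + 1) - g i := by
    intro i
    have hFi : F^[i+1] x = D (F^[i] x) * F^[i] x := by
      rw [Function.iterate_succ_apply', hF, hD]
      split <;> ring
    have hDpos : 0 < D (F^[i] x) := by rw [hD]; split <;> assumption
    simp only [hg, hFi, Real.log_mul (ne_of_gt hDpos) (ne_of_gt (hpos i))]
    ring
  have hsum : ∀ n, ∑ i ∈ Finset.range n, Real.log (D (F^[i] x)) = g n - g 0 := by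
    intro n
    simp only [hterm]
    exact Finset.sum_range_sub g n
  simp only [hsum]
  have hC : ∀ n : ℕ, |g n - g 0| ≤ |Real.log b| + |Real.log a| + |g 0| := by
    intro n
    have h1 : |g n| ≤ |Real.log b| + |Real.log a| := by
      rcases le_or_gt 0 (g n) with hgn | hgn
      · have : g n ≤ Real.log b := Real.log_le_log (hpos n) (hbdd n).2
        calc |g n| = g n := abs_of_nonneg hgn
          _ ≤ Real.log b := this
          _ ≤ |Real.log b| := le_abs_self _
          _ ≤ _ := le_add_of_nonneg_right (abs_nonneg _)
      · have : Real.log a ≤ g n := Real.log_le_log ha (hbdd n).1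
        calc |g n| = -(g n) := abs_of_neg hgn
          _ ≤ -(Real.log a) := by linarith
          _ ≤ |Real.log a| := neg_le_abs _
          _ ≤ _ := le_add_of_nonneg_left (abs_nonneg _)
    calc |g n - g 0| ≤ |g n| + |g 0| := abs_sub _ _
      _ ≤ _ := by linarith
  have h0 : Tendsto (fun n : ℕ => (n : ℝ)⁻¹ * (|Real.log b| + |Real.log a| + |g 0|))
      atTop (nhds 0) := by
    simpa using tendsto_inv_atTop_nhds_zero_nat.mul_const
      (|Real.log b| + |Real.log a| + |g 0|)
  refine squeeze_zero_norm (fun n => ?_) h0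
  rcases Nat.eq_zero_or_pos n with rfl | hn
  · simp
  · have hninv : (0:ℝ) ≤ (n : ℝ)⁻¹ := by positivity
    rw [Real.norm_eq_abs, abs_mul, abs_of_nonneg hninv]
    exact mul_le_mul_of_nonneg_left (hC n) hninv
end
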